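/- arXiv:2007.09434 — 2 statements merged into one kernel-verified Lean document; each statement's English description precedes it below -/
import Mathlib

section
/- Let H ⊂ G be closed, Y a Hamiltonian H-space with momentum map Ψ, and let Φ_{N//H} be the momentum map of the induced space Ind_H^G Y. A coadjoint orbit 𝒪 ⊂ 𝔤* intersects the image of Φ_{N//H} if and only if its restriction 𝒪|_𝔥 = {m|_𝔥 : m ∈ 𝒪} intersects the image of Ψ. -/
/-!
In the left trivialization a point `(q, μ, y)` of `N` lies in `ψ⁻¹(0)` exactly when
`μ|_𝔥 = Ψ(y)`, and `φ` sends it to `q · μ`. Hence `φ(ψ⁻¹(0))` is the `G`-saturation of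
`{μ : μ|_𝔥 ∈ Im Ψ}`, and a `G`-invariant set such as a coadjoint orbit meets this saturation
if and only if it meets `{μ : μ|_𝔥 ∈ Im Ψ}` itself. That `coad` is an action is the chain rule for the
derivative of conjugation.
-/

open Manifold Topology

noncomputable section

variable {E : Type*} [NormedAddCommGroup E] [NormedSpace ℝ E]
variable {F : Type*} [NormedAddCommGroup F] [NormedSpace ℝ F]
variable {G : Type*} [TopologicalSpace G] [ChartedSpace E G] [Group G] [LieGroup 𝓘(ℝ, E) (⊤ : ℕ∞) G]
variable {H : Type*} [TopologicalSpace H] [ChartedSpace F H] [Group H] [LieGroup 𝓘(ℝ, F) (⊤ : ℕ∞) H]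

/-- The adjoint representation of `G` on `𝔤 = E`, as the derivative of conjugation
at the identity. -/
def Ad (g : G) : E →L[ℝ] E :=
  mfderiv 𝓘(ℝ, E) 𝓘(ℝ, E) (fun x => g * x * g⁻¹) (1 : G)

/-- The coadjoint action of `G` on `𝔤* = E →L[ℝ] ℝ`. -/
def coad (g : G) (m : E →L[ℝ] ℝ) : E →L[ℝ] ℝ := m.comp (Ad g⁻¹)

/-- The derivative at the identity of the inclusion `ι : H → G`, i.e. the
inclusion `𝔥 → 𝔤` of Lie algebras. -/
def dIota (ι : H →* G) : F →L[ℝ] E :=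
  mfderiv 𝓘(ℝ, F) 𝓘(ℝ, E) (ι : H → G) (1 : H)

variable {Y : Type*} [MulAction H Y]

/-- The momentum map `φ(p, y) = p q⁻¹` for the `G`-action on `N = T*G × Y`, in the
left trivialization `T*G ≅ G × 𝔤*` (where `p ∈ T*_q G` corresponds to
`(q, μ)`, `μ = q⁻¹ p`): `φ(q, μ, y) = μ ∘ Ad(q⁻¹)`. -/
def phiMap (n : G × (E →L[ℝ] ℝ) × Y) : E →L[ℝ] ℝ := coad n.1 n.2.1

/-- The momentum map `ψ(p, y) = Ψ(y) − (q⁻¹ p)|_𝔥` for the `H`-action on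
`N = T*G × Y`, in the left trivialization: `ψ(q, μ, y) = Ψ(y) − μ ∘ dι`. -/
def psiMap (ι : H →* G) (Ψ : Y → F →L[ℝ] ℝ) (n : G × (E →L[ℝ] ℝ) × Y) : F →L[ℝ] ℝ :=
  Ψ n.2.2 - (n.2.1.comp (dIota ι))

/-- The `G`-action `g(p, y) = (g p, y)` on `N = T*G × Y` (left translation does not
change the left trivialization `μ`). -/
def actG (g : G) (n : G × (E →L[ℝ] ℝ) × Y) : G × (E →L[ℝ] ℝ) × Y :=
  (g * n.1, n.2.1, n.2.2)

/-- The `H`-action `h(p, y) = (p h⁻¹, h(y))` on `N = T*G × Y` in the left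
trivialization. -/
def actH (ι : H →* G) (h : H) (n : G × (E →L[ℝ] ℝ) × Y) : G × (E →L[ℝ] ℝ) × Y :=
  (n.1 * (ι h)⁻¹, n.2.1.comp (Ad ((ι h)⁻¹)), h • n.2.2)

omit [LieGroup 𝓘(ℝ, E) (⊤ : ℕ∞) G] in
lemma Ad_one : Ad (1 : G) = ContinuousLinearMap.id ℝ E := by
  have hconj : (fun x : G => 1 * x * (1 : G)⁻¹) = id := by funext x; simp
  rw [Ad, hconj, mfderiv_id]
  rfl

lemma contMDiff_conj (g : G) :
    ContMDiff 𝓘(ℝ, E) 𝓘(ℝ, E) (⊤ : ℕ∞) (fun x : G => g * x * g⁻¹) :=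
  (contMDiff_const.mul contMDiff_id).mul contMDiff_const

lemma Ad_mul (g h : G) : Ad (g * h) = (Ad g : E →L[ℝ] E).comp (Ad h) := by
  have hconj : (fun x : G => g * h * x * (g * h)⁻¹) =
      (fun x => g * x * g⁻¹) ∘ (fun x => h * x * h⁻¹) := by
    funext x; simp [mul_assoc]
  have hg := (contMDiff_conj (E := E) g).mdifferentiableAt (x := (h * 1 * h⁻¹ : G)) (by simp)
  have hh := (contMDiff_conj (E := E) h).mdifferentiableAt (x := (1 : G)) (by simp)
  rw [Ad, hconj, mfderiv_comp 1 hg hh, mul_one, mul_inv_cancel]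
  rfl

omit [LieGroup 𝓘(ℝ, E) (⊤ : ℕ∞) G] in
lemma coad_one (m : E →L[ℝ] ℝ) : coad (1 : G) m = m := by
  rw [coad, inv_one, Ad_one]
  rfl

lemma coad_coad (g h : G) (m : E →L[ℝ] ℝ) : coad g (coad h m) = coad (g * h) m := by
  simp only [coad, mul_inv_rev, Ad_mul, ContinuousLinearMap.comp_assoc]

omit [LieGroup 𝓘(ℝ, F) (⊤ : ℕ∞) H] [MulAction H Y] in
lemma phiMap_image_psiMap_eq_zero (ι : H →* G) (Ψ : Y → F →L[ℝ] ℝ) :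
    phiMap '' {n : G × (E →L[ℝ] ℝ) × Y | psiMap ι Ψ n = 0} =
      {x | ∃ q : G, (coad q⁻¹ x).comp (dIota ι) ∈ Set.range Ψ} := by
  ext x
  simp only [Set.mem_image, Set.mem_ofPred_eq, psiMap, sub_eq_zero, Prod.exists, phiMap]
  constructor
  · rintro ⟨q, μ, y, hy, rfl⟩
    exact ⟨q, y, by rw [coad_coad, inv_mul_cancel, coad_one, hy]⟩
  · rintro ⟨q, y, hy⟩
    exact ⟨q, coad q⁻¹ x, y, hy, by rw [coad_coad, mul_inv_cancel, coad_one]⟩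

theorem orbit_meets_induced_image_iff_general
    (ι : H →* G)
    (Ψ : Y → F →L[ℝ] ℝ)
    (m : E →L[ℝ] ℝ) :
    ((Set.range fun g : G => coad g m) ∩
        (phiMap '' {n : G × (E →L[ℝ] ℝ) × Y | psiMap ι Ψ n = 0})).Nonempty ↔
    (((fun m' : E →L[ℝ] ℝ => m'.comp (dIota ι)) '' (Set.range fun g : G => coad g m)) ∩
        Set.range Ψ).Nonempty := by
  rw [phiMap_image_psiMap_eq_zero]
  constructor
  · rintro ⟨_, ⟨g, rfl⟩, q, hq⟩
    exact ⟨_, ⟨_, ⟨q⁻¹ * g, rfl⟩, rfl⟩, by rwa [coad_coad] at hq⟩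
  · rintro ⟨_, ⟨_, ⟨g, rfl⟩, rfl⟩, hg⟩
    exact ⟨coad g m, ⟨g, rfl⟩, 1, by rwa [inv_one, coad_one]⟩

/-- Let `Φ_{N//H}` be the momentum map of the induced space
`Ind_H^G Y = ψ⁻¹(0)/H`, so that `Im(Φ_{N//H}) = φ(ψ⁻¹(0))`.  A coadjoint orbit
`𝒪 = G·m` of `G` intersects `Im(Φ_{N//H})` if and only if its restriction
`𝒪|_𝔥 = {m'|_𝔥 : m' ∈ 𝒪}` intersects `Im(Ψ)`. -/
theorem orbit_meets_induced_image_iff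
    (ι : H →* G) (hι : ContMDiff 𝓘(ℝ, F) 𝓘(ℝ, E) (⊤ : ℕ∞) (ι : H → G))
    (Ψ : Y → F →L[ℝ] ℝ)
    (hΨ : ∀ (h : H) (y : Y), Ψ (h • y) = coad h (Ψ y))
    (m : E →L[ℝ] ℝ) :
    ((Set.range fun g : G => coad g m) ∩
        (phiMap '' {n : G × (E →L[ℝ] ℝ) × Y | psiMap ι Ψ n = 0})).Nonempty ↔
    (((fun m' : E →L[ℝ] ℝ => m'.comp (dIota ι)) '' (Set.range fun g : G => coad g m)) ∩
        Set.range Ψ).Nonempty :=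
  orbit_meets_induced_image_iff_general ι Ψ m
end
end

section
/- If the induced Hamiltonian G-space Ind_H^G Y is homogeneous under G (G acts transitively), then Y is homogeneous under H. -/
open Manifold Topology

noncomputable section

variable {E : Type*} [NormedAddCommGroup E] [NormedSpace ℝ E]
variable {F : Type*} [NormedAddCommGroup F] [NormedSpace ℝ F]
variable {G : Type*} [TopologicalSpace G] [ChartedSpace E G] [Group G] [LieGroup 𝓘(ℝ, E) (⊤ : ℕ∞) G]
variable {H : Type*} [TopologicalSpace H] [ChartedSpace F H] [Group H] [LieGroup 𝓘(ℝ, F) (⊤ : ℕ∞) H]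

variable {Y : Type*} [MulAction H Y]

/-! Every `y : Y` lies on the zero level `ψ⁻¹(0)` above the identity of `G`: by Hahn–Banach,
`Ψ y ∈ 𝔥*` extends along the injective map `dι : 𝔥 → 𝔤` to some `m ∈ 𝔤*`, and then
`ψ(1, m, y) = 0`. Transitivity on `ψ⁻¹(0)` relates `(1, m₁, y₁)` to `(1, m₂, y₂)`, and the
`Y`-component of the `G × H`-action is just the `H`-action on `Y`. -/

theorem ContinuousLinearMap.exists_comp_eq_of_injective {R V W : Type*} [Field R]
    [TopologicalSpace R] [IsTopologicalRing R] [AddCommGroup V] [TopologicalSpace V] [Module R V]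
    [SeparatingDual R V] [AddCommGroup W] [TopologicalSpace W] [Module R W]
    [FiniteDimensional R W] {f : W →L[R] V} (hf : Function.Injective f) (φ : W →L[R] R) :
    ∃ m : V →L[R] R, m.comp f = φ := by
  obtain ⟨m, hm⟩ := SeparatingDual.dualMap_surjective_iff.mpr hf φ.toLinearMap
  exact ⟨m, ContinuousLinearMap.coe_injective hm⟩

theorem homogeneous_of_induced_homogeneous_general
    [FiniteDimensional ℝ F]
    (ι : H →* G)
    (hinj : Function.Injective (dIota (E := E) (F := F) ι))
    (Ψ : Y → F →L[ℝ] ℝ)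
    (htrans : ∀ n n' : G × (E →L[ℝ] ℝ) × Y,
      psiMap ι Ψ n = 0 → psiMap ι Ψ n' = 0 →
        ∃ (g : G) (h : H), n' = actH ι h (actG g n)) :
    ∀ y₁ y₂ : Y, ∃ h : H, y₂ = h • y₁ := by
  have zero_level : ∀ y, ∃ m : E →L[ℝ] ℝ, psiMap ι Ψ ((1 : G), m, y) = 0 := fun y =>
    (ContinuousLinearMap.exists_comp_eq_of_injective hinj (Ψ y)).imp
      fun _ hm => sub_eq_zero.mpr hm.symm
  intro y₁ y₂
  obtain ⟨m₁, hm₁⟩ := zero_level y₁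
  obtain ⟨m₂, hm₂⟩ := zero_level y₂
  obtain ⟨_, h, hmove⟩ := htrans _ _ hm₁ hm₂
  exact ⟨h, congrArg (fun n => n.2.2) hmove⟩

/-- If the induced Hamiltonian `G`-space `Ind_H^G Y = ψ⁻¹(0)/H`
is homogeneous under `G` — i.e. the descended `G`-action is transitive, which
means that any two points of the zero level `ψ⁻¹(0)` are related by the
`G × H`-action — then `Y` is homogeneous under `H`. -/
theorem homogeneous_of_induced_homogeneous
    [FiniteDimensional ℝ E] [FiniteDimensional ℝ F]
    (ι : H →* G) (hι : ContMDiff 𝓘(ℝ, F) 𝓘(ℝ, E) (⊤ : ℕ∞) (ι : H → G))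
    (hinj : Function.Injective (dIota (E := E) (F := F) ι))
    (Ψ : Y → F →L[ℝ] ℝ)
    (hΨ : ∀ (h : H) (y : Y), Ψ (h • y) = coad h (Ψ y))
    (htrans : ∀ n n' : G × (E →L[ℝ] ℝ) × Y,
      psiMap ι Ψ n = 0 → psiMap ι Ψ n' = 0 →
        ∃ (g : G) (h : H), n' = actH ι h (actG g n)) :
    ∀ y₁ y₂ : Y, ∃ h : H, y₂ = h • y₁ :=
  homogeneous_of_induced_homogeneous_general ι hinj Ψ htrans
end
end
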